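/- Let γ > 0, b > 0, p > 0, p₂ ≥ p, q_max > b + p/γ. The consumer's overall optimal actual consumption satisfies: if not called (r=0) and 0 ≤ p_r ≤ p/(p₂+p), then q* = b + p_r·p₂/(γ(1-p_r)); if not called and p_r ≥ p/(p₂+p), then q* = b + p/γ; if called (r=1), then q* = max(b - p₂/γ, 0) for all p_r ∈ [0,1]. -/

import Mathlib

open Set

/-!
Writing `c = b + p/γ` for the satiation point, the utility is `G q = γ/2 (c² - (c - q)₊²)`:
concave and nondecreasing, with slope `γ (c - x)` at any `x ≤ c`, and this supergradient bounds `G`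
from above everywhere. Every claim is then a first-order condition. When not called, consumption
up to the report `b̂* ∈ [b, c]` is paid for anyway, and beyond it costs `p` per unit, at least the
slope `γ (c - b̂*)`; a report `b̂* = qmax ≥ c` makes all consumption prepaid, so `c` is optimal.
When called, the marginal cost is `p` below `t = (b - p₂/γ)₊` and at least `p + p₂` above it,
while the slope `γ (c - t) = p + γ (b - t)` lies between these two.
-/

noncomputable def satUtility (γ c q : ℝ) : ℝ := γ / 2 * (c ^ 2 - max (c - q) 0 ^ 2)

section satUtility

variable {γ c : ℝ}

lemma satUtility_of_le {q : ℝ} (h : q ≤ c) : satUtility γ c q = γ * c * q - γ / 2 * q ^ 2 := by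
  rw [satUtility, max_eq_left (sub_nonneg.2 h)]
  ring

lemma satUtility_of_ge {q : ℝ} (h : c ≤ q) : satUtility γ c q = γ / 2 * c ^ 2 := by
  rw [satUtility, max_eq_right (sub_nonpos.2 h)]
  ring

lemma satUtility_le_add_mul (hγ : 0 ≤ γ) {x : ℝ} (hx : x ≤ c) (y : ℝ) :
    satUtility γ c y ≤ satUtility γ c x + γ * (c - x) * (y - x) := by
  rw [satUtility_of_le hx]
  rcases le_total y c with hy | hy
  · rw [satUtility_of_le hy]
    nlinarith [mul_nonneg hγ (sq_nonneg (y - x))]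
  · rw [satUtility_of_ge hy]
    nlinarith [mul_nonneg (mul_nonneg hγ (sub_nonneg.2 hx)) (sub_nonneg.2 hy),
      mul_nonneg hγ (sq_nonneg (c - x))]

lemma satUtility_le_self (hγ : 0 ≤ γ) (q : ℝ) : satUtility γ c q ≤ satUtility γ c c := by
  simpa using satUtility_le_add_mul hγ le_rfl q

theorem isMaxOn_satUtility_sub_mul_max (hγ : 0 ≤ γ) {p B : ℝ} (hBc : B ≤ c)
    (hslope : γ * (c - B) ≤ p) :
    IsMaxOn (fun q => satUtility γ c q - p * max B q) univ B := by
  refine isMaxOn_univ_iff.2 fun q => ?_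
  have hsup := satUtility_le_add_mul hγ hBc q
  rcases le_total q B with hq | hq
  · rw [max_eq_left hq, max_self]
    nlinarith [mul_nonneg (mul_nonneg hγ (sub_nonneg.2 hBc)) (sub_nonneg.2 hq)]
  · rw [max_eq_right hq, max_self]
    nlinarith [mul_le_mul_of_nonneg_right hslope (sub_nonneg.2 hq)]

theorem isMaxOn_satUtility_called (hγ : 0 ≤ γ) {p p₂ B t : ℝ} (hp₂ : 0 ≤ p₂) (htB : t ≤ B)
    (htc : t ≤ c) (hlow : p ≤ γ * (c - t)) (hup : γ * (c - t) ≤ p + p₂) :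
    IsMaxOn (fun q => satUtility γ c q - (p * q - p₂ * max (B - q) 0 + p₂ * |q - t|))
      univ t := by
  refine isMaxOn_univ_iff.2 fun q => ?_
  simp only [sub_self, abs_zero, mul_zero, add_zero, max_eq_left (sub_nonneg.2 htB)]
  have hsup := satUtility_le_add_mul hγ htc q
  rcases le_total q t with hq | hq
  · rw [abs_of_nonpos (sub_nonpos.2 hq), max_eq_left (by linarith)]
    nlinarith [mul_nonneg (sub_nonneg.2 hlow) (sub_nonneg.2 hq)]
  · have hrebate : p₂ * max (B - q) 0 ≤ p₂ * (B - t) :=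
      mul_le_mul_of_nonneg_left (max_le (by linarith) (by linarith)) hp₂
    rw [abs_of_nonneg (sub_nonneg.2 hq)]
    nlinarith [mul_nonneg (sub_nonneg.2 hup) (sub_nonneg.2 hq)]

end satUtility

lemma eq_satUtility {γ b p : ℝ} (hγ : 0 < γ) {G : ℝ → ℝ}
    (hG : ∀ q, G q = if q ≤ b + p / γ then -γ/2 * q^2 + (γ*b + p) * q
                     else p^2/(2*γ) + γ*b^2/2 + p*b) :
    G = satUtility γ (b + p / γ) := by
  funext q
  rw [hG]
  split_ifs with hq
  · rw [satUtility_of_le hq]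
    field_simp
    ring
  · rw [satUtility_of_ge (le_of_not_ge hq)]
    field_simp
    ring

lemma report_nonneg_and_le {γ p p₂ pr : ℝ} (hγ : 0 < γ) (hp : 0 < p) (hp₂ : 0 < p₂)
    (hpr : 0 ≤ pr) (h : pr ≤ p / (p₂ + p)) :
    0 ≤ pr * p₂ / (γ * (1 - pr)) ∧ pr * p₂ / (γ * (1 - pr)) ≤ p / γ := by
  have hmul : pr * (p₂ + p) ≤ p := (le_div_iff₀ (by positivity)).1 h
  have hpr1 : 0 < 1 - pr := by nlinarith
  refine ⟨by positivity, ?_⟩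
  rw [div_le_div_iff₀ (by positivity) hγ]
  nlinarith

lemma report_eq_of_eq {γ p p₂ pr : ℝ} (hγ : 0 < γ) (hp : 0 < p) (hp₂ : 0 < p₂)
    (h : pr = p / (p₂ + p)) : pr * p₂ / (γ * (1 - pr)) = p / γ := by
  subst h
  field_simp
  rw [add_sub_cancel_right, div_self hp₂.ne']

lemma max_sub_div_bounds {γ b p₂ : ℝ} (hγ : 0 < γ) (hb : 0 ≤ b) (hp₂ : 0 ≤ p₂) :
    max (b - p₂ / γ) 0 ≤ b ∧ γ * (b - max (b - p₂ / γ) 0) ≤ p₂ := by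
  refine ⟨max_le (by linarith [div_nonneg hp₂ hγ.le]) hb, ?_⟩
  rw [← le_div_iff₀' hγ]
  linarith [le_max_left (b - p₂ / γ) 0]

/-- overall optimal actual consumption, combining first-stage optimal
reports with second-stage optimal responses. -/
theorem stmt11 (γ b p p₂ qmax pr : ℝ) (hγ : 0 < γ) (hb : 0 < b) (hp : 0 < p)
    (hp₂ : p ≤ p₂) (hqmax : b + p / γ < qmax) (hpr : pr ∈ Set.Icc (0:ℝ) 1)
    (G : ℝ → ℝ)
    (hG : ∀ q, G q = if q ≤ b + p / γ then -γ/2 * q^2 + (γ*b + p) * q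
                     else p^2/(2*γ) + γ*b^2/2 + p*b)
    (bhatstar : ℝ)
    (hbhatstar : bhatstar = if pr ≤ p/(p₂+p) then b + pr*p₂/(γ*(1-pr)) else qmax) :
    (pr ≤ p/(p₂+p) →
      IsMaxOn (fun q => G q - p * max bhatstar q) (Set.Icc 0 qmax)
        (b + pr*p₂/(γ*(1-pr)))) ∧
    (p/(p₂+p) ≤ pr →
      IsMaxOn (fun q => G q - p * max bhatstar q) (Set.Icc 0 qmax) (b + p/γ)) ∧
    IsMaxOn
      (fun q => G q - (p*q - p₂ * max (bhatstar - q) 0 + p₂ * |q - max (b - p₂/γ) 0|))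
      (Set.Icc 0 qmax) (max (b - p₂/γ) 0) := by
  obtain rfl := eq_satUtility hγ hG
  have hp₂pos : 0 < p₂ := hp.trans_le hp₂
  have hslope : ∀ x, γ * (b + p / γ - x) = p + γ * (b - x) := fun x => by field_simp; ring
  have hbB : b ≤ bhatstar := by
    rw [hbhatstar]
    split_ifs with h
    · linarith [(report_nonneg_and_le hγ hp hp₂pos hpr.1 h).1]
    · linarith [div_pos hp hγ]
  refine ⟨fun h => ?_, fun h => ?_, ?_⟩
  · obtain ⟨hs0, hsc⟩ := report_nonneg_and_le hγ hp hp₂pos hpr.1 h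
    rw [hbhatstar, if_pos h]
    refine (isMaxOn_satUtility_sub_mul_max hγ.le (by linarith) ?_).on_subset (subset_univ _)
    nlinarith [hslope (b + pr * p₂ / (γ * (1 - pr))), mul_nonneg hγ.le hs0]
  · rw [hbhatstar]
    split_ifs with h'
    · rw [report_eq_of_eq hγ hp hp₂pos (le_antisymm h' h)]
      exact (isMaxOn_satUtility_sub_mul_max hγ.le le_rfl (by simpa using hp.le)).on_subset
        (subset_univ _)
    · intro q hq
      simp only [mem_ofPred_eq, max_eq_left hq.2, max_eq_left hqmax.le]
      linarith [satUtility_le_self hγ.le (c := b + p / γ) q]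
  · obtain ⟨htb, hγt⟩ := max_sub_div_bounds hγ hb.le hp₂pos.le
    refine (isMaxOn_satUtility_called hγ.le hp₂pos.le (htb.trans hbB)
      (by linarith [div_pos hp hγ]) ?_ ?_).on_subset (subset_univ _)
    · nlinarith [hslope (max (b - p₂ / γ) 0), mul_nonneg hγ.le (sub_nonneg.2 htb)]
    · linarith [hslope (max (b - p₂ / γ) 0)]
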